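/- arXiv:0903.4289 — 3 statements merged into one kernel-verified Lean document; each statement's English description precedes it below -/
import Mathlib

section
/- Two finite subsets A, B of the circle ℝ/ℤ are unlinked (i.e., B is contained in a single connected component of (ℝ/ℤ) \ A) if and only if A is contained in a single connected component of (ℝ/ℤ) \ B. -/
/-!
On the circle, the complement of a preconnected set `S` that misses a point `a` is again
preconnected: cutting the circle at `a`, `S` becomes an interval `J` of `(r, r + p)`, and `Sᶜ` is
the image of the two intervals on either side of `J`, which are glued at `a = ↑r = ↑(r + p)`.

If `B` lies in the component `C` of `Aᶜ`, apply this to `C`, which misses any point of `A`: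
then `Cᶜ` is a preconnected subset of `Bᶜ` containing `A`, so `A` lies in one component of `Bᶜ`.
When `A = ∅` one only needs a point outside the finite set `B`.
-/

open Set Topology

/-- The circle `ℝ/ℤ`. -/
abbrev Circle1 := AddCircle (1 : ℝ)

/-- `A` and `B` are *unlinked*: `B` is contained in a single connected component of the
complement `(ℝ/ℤ) \ A`. -/
def SetUnlinked (A B : Set Circle1) : Prop :=
  ∃ z ∈ Aᶜ, B ⊆ connectedComponentIn Aᶜ z

namespace AddCircle

variable {p : ℝ} [hp : Fact (0 < p)]

instance : Infinite (AddCircle p) :=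
  have : Infinite (Ico 0 (0 + p)) := (Ico_infinite (by simpa using hp.out)).to_subtype
  Infinite.of_injective _ (equivIco p 0).symm.injective

theorem exists_ordConnected_image_eq_of_isPreconnected {S : Set (AddCircle p)}
    (hS : IsPreconnected S) {r : ℝ} (hr : (r : AddCircle p) ∉ S) :
    ∃ J ⊆ Ioo r (r + p), J.OrdConnected ∧ (↑) '' J = S := by
  let e := openPartialHomeomorphCoe p r
  have hSe : S ⊆ e.target := subset_compl_singleton_iff.mpr hr
  refine ⟨e.symm '' S, ?_, ?_, e.image_symm_image_of_subset_target hSe⟩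
  · exact (image_mono hSe).trans e.symm_image_target_eq_source.subset
  · exact (hS.image _ (e.continuousOn_symm.mono hSe)).ordConnected

theorem compl_coe_image_eq {J : Set ℝ} (hJ : J.OrdConnected) {r : ℝ} (hJr : J ⊆ Ioo r (r + p)) :
    ((↑) '' J : Set (AddCircle p))ᶜ =
      (↑) '' (Ico r (r + p) ∩ ⋂ y ∈ J, Iio y) ∪ (↑) '' (Ioc r (r + p) ∩ ⋂ y ∈ J, Ioi y) := by
  ext w
  simp only [mem_compl_iff, mem_union, mem_image, mem_inter_iff, mem_iInter₂, mem_Iio, mem_Ioi]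
  constructor
  · intro hw
    obtain ⟨x, hx, rfl⟩ : w ∈ (↑) '' Ico r (r + p) := by simp
    have hxJ : x ∉ J := fun h => hw ⟨x, h, rfl⟩
    by_cases hbelow : ∀ y ∈ J, x < y
    · exact .inl ⟨x, ⟨hx, hbelow⟩, rfl⟩
    push Not at hbelow
    obtain ⟨y₁, hy₁, hy₁x⟩ := hbelow
    refine .inr ⟨x, ⟨⟨(hJr hy₁).1.trans_le hy₁x, hx.2.le⟩, fun y hy => ?_⟩, rfl⟩
    by_contra! hxy
    exact hxJ (hJ.out hy₁ hy ⟨hy₁x, hxy⟩)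
  · rintro (⟨x, ⟨hx, hxJ⟩, rfl⟩ | ⟨x, ⟨hx, hxJ⟩, rfl⟩) ⟨y, hy, hyx⟩
    · exact (hxJ y hy).ne' ((coe_eq_coe_iff_of_mem_Ico (Ioo_subset_Ico_self (hJr hy)) hx).mp hyx)
    · exact (hxJ y hy).ne ((coe_eq_coe_iff_of_mem_Ioc (Ioo_subset_Ioc_self (hJr hy)) hx).mp hyx)

theorem isPreconnected_compl {S : Set (AddCircle p)} (hS : IsPreconnected S) {a : AddCircle p}
    (ha : a ∉ S) : IsPreconnected Sᶜ := by
  obtain ⟨r, rfl⟩ := QuotientAddGroup.mk_surjective a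
  obtain ⟨J, hJr, hJ, rfl⟩ := exists_ordConnected_image_eq_of_isPreconnected hS ha
  rw [compl_coe_image_eq hJ hJr]
  have hr : r ∈ Ico r (r + p) ∩ ⋂ y ∈ J, Iio y :=
    ⟨left_mem_Ico.mpr (by linarith [hp.out]), mem_iInter₂.mpr fun y hy => (hJr hy).1⟩
  have hrp : r + p ∈ Ioc r (r + p) ∩ ⋂ y ∈ J, Ioi y :=
    ⟨right_mem_Ioc.mpr (by linarith [hp.out]), mem_iInter₂.mpr fun y hy => (hJr hy).2⟩
  have hL : (Ico r (r + p) ∩ ⋂ y ∈ J, Iio y).OrdConnected :=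
    ordConnected_Ico.inter (ordConnected_biInter fun y _ => ordConnected_Iio)
  have hR : (Ioc r (r + p) ∩ ⋂ y ∈ J, Ioi y).OrdConnected :=
    ordConnected_Ioc.inter (ordConnected_biInter fun y _ => ordConnected_Ioi)
  have hcoe : Continuous ((↑) : ℝ → AddCircle p) := AddCircle.continuous_mk' p
  exact .union _ (mem_image_of_mem _ hr) ⟨r + p, hrp, coe_add_period p r⟩
    (hL.isPreconnected.image _ hcoe.continuousOn) (hR.isPreconnected.image _ hcoe.continuousOn)

end AddCircle

theorem SetUnlinked.symm {A B : Set Circle1} (hB : Bᶜ.Nonempty) (hAB : Disjoint A B)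
    (h : SetUnlinked A B) : SetUnlinked B A := by
  obtain ⟨z, -, hBC⟩ := h
  rcases A.eq_empty_or_nonempty with rfl | ⟨a, ha⟩
  · obtain ⟨w, hw⟩ := hB
    exact ⟨w, hw, empty_subset _⟩
  set C := connectedComponentIn Aᶜ z
  have hCA : C ⊆ Aᶜ := connectedComponentIn_subset _ _
  have haC : a ∈ Cᶜ := fun h => hCA h ha
  have hC : IsPreconnected Cᶜ :=
    AddCircle.isPreconnected_compl isPreconnected_connectedComponentIn haC
  have hCB : Cᶜ ⊆ connectedComponentIn Bᶜ a :=
    hC.subset_connectedComponentIn haC (compl_subset_compl.mpr hBC)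
  exact ⟨a, hAB.notMem_of_mem_left ha, (subset_compl_comm.mp hCA).trans hCB⟩

/-- Two disjoint finite subsets `A, B` of the circle `ℝ/ℤ` are unlinked if and only if `A`
is contained in a single connected component of `(ℝ/ℤ) \ B`. -/
theorem setUnlinked_comm (A B : Set Circle1) (hA : A.Finite) (hB : B.Finite)
    (hAB : Disjoint A B) : SetUnlinked A B ↔ SetUnlinked B A :=
  ⟨.symm hB.infinite_compl.nonempty hAB, .symm hA.infinite_compl.nonempty hAB.symm⟩
end

section
/- Two disjoint finite subsets A, B of the unit circle are unlinked if and only if the Euclidean convex hulls of A and B in ℂ (identifying ℝ/ℤ with the unit circle via θ ↦ exp(2πiθ)) are disjoint. -/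
/-!
For `c : ℝ` and `0 ≤ w ≤ 1/2`, a point `y` of `ℝ/ℤ` lies on the closed arc `[c - w, c + w]`
exactly when `⟪e c, e y⟫ ≥ cos 2πw`, where `e y = exp (2πiy)`: lines cut the circle in arcs.

If `B` lies in a component `C` of the complement of a nonempty `A`, lifting `C` to an interval
of `ℝ` puts `B` on a closed arc of length `< 1` inside `C`, and the chord of that arc separates
the two hulls. Conversely, disjoint hulls of finite sets are strictly separated by a line
(Hahn–Banach); the open side containing `B` meets the circle in an arc, which is connected and
avoids `A`.
-/

open Set Topology

/-- The identification of `ℝ/ℤ` with the unit circle in `ℂ`, `θ ↦ exp (2πiθ)`. -/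
noncomputable def circleEmbed (θ : Circle1) : ℂ := (AddCircle.toCircle θ : ℂ)

open scoped InnerProductSpace
open Real

instance : Infinite Circle1 :=
  (AddCircle.equivIco (1 : ℝ) 0).infinite_iff.2 (Ico_infinite (by norm_num)).to_subtype

lemma exists_coe_eq_of_abs_sub_le_half (c : ℝ) (y : Circle1) :
    ∃ x : ℝ, |x - c| ≤ 1 / 2 ∧ (x : Circle1) = y := by
  obtain ⟨x, hx, rfl⟩ : y ∈ ((↑) : ℝ → Circle1) '' Icc (c - 1 / 2) (c - 1 / 2 + 1) := by
    rw [AddCircle.coe_image_Icc_eq]; trivial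
  exact ⟨x, abs_sub_comm x c ▸ mem_Icc_iff_abs_le.2 ⟨hx.1, by linarith [hx.2]⟩, rfl⟩

lemma circleEmbed_coe (x : ℝ) : circleEmbed x = Complex.exp ((2 * π * x : ℝ) * Complex.I) := by
  rw [circleEmbed, AddCircle.toCircle_apply_mk, Circle.coe_exp, div_one]

lemma inner_circleEmbed_coe (c x : ℝ) :
    ⟪circleEmbed c, circleEmbed x⟫_ℝ = cos (2 * π * (x - c)) := by
  rw [Complex.inner, circleEmbed_coe, circleEmbed_coe, ← Complex.exp_conj, map_mul,
    Complex.conj_ofReal, Complex.conj_I, ← Complex.exp_add, mul_neg, ← sub_eq_add_neg,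
    ← sub_mul, ← Complex.ofReal_sub, Complex.exp_ofReal_mul_I_re]
  ring_nf

lemma exists_eq_norm_smul_circleEmbed (w : ℂ) : ∃ c : ℝ, w = ‖w‖ • circleEmbed c := by
  refine ⟨w.arg / (2 * π), ?_⟩
  rw [circleEmbed_coe, Complex.real_smul, mul_div_cancel₀ _ two_pi_pos.ne',
    Complex.norm_mul_exp_arg_mul_I]

lemma cos_two_pi_mul_le_cos_two_pi_mul_iff {a b : ℝ} (ha : |a| ≤ 1 / 2)
    (hb : |b| ≤ 1 / 2) :
    cos (2 * π * a) ≤ cos (2 * π * b) ↔ |b| ≤ |a| := by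
  have hmem : ∀ {x : ℝ}, |x| ≤ 1 / 2 → 2 * π * |x| ∈ Icc 0 π := fun hx =>
    ⟨by positivity, by nlinarith [pi_pos]⟩
  rw [← cos_abs (2 * π * a), ← cos_abs (2 * π * b), abs_mul _ a, abs_mul _ b,
    abs_of_pos two_pi_pos, strictAntiOn_cos.le_iff_ge (hmem ha) (hmem hb)]
  exact mul_le_mul_iff_right₀ two_pi_pos

lemma mem_coe_image_Icc_iff_cos_le_inner {c w : ℝ} (hw₀ : 0 ≤ w) (hw₁ : w ≤ 1 / 2)
    (y : Circle1) :
    y ∈ ((↑) : ℝ → Circle1) '' Icc (c - w) (c + w) ↔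
      cos (2 * π * w) ≤ ⟪circleEmbed c, circleEmbed y⟫_ℝ := by
  have key : ∀ x : ℝ, |x - c| ≤ 1 / 2 →
      (x ∈ Icc (c - w) (c + w) ↔ cos (2 * π * w) ≤ ⟪circleEmbed c, circleEmbed x⟫_ℝ) := by
    intro x hx
    rw [inner_circleEmbed_coe, cos_two_pi_mul_le_cos_two_pi_mul_iff
      (by rwa [abs_of_nonneg hw₀]) hx, abs_of_nonneg hw₀, abs_sub_comm, mem_Icc_iff_abs_le]
  constructor
  · rintro ⟨x, hx, rfl⟩
    exact (key x ((abs_sub_comm x c ▸ mem_Icc_iff_abs_le.2 hx).trans hw₁)).1 hx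
  · intro hy
    obtain ⟨x, hx, rfl⟩ := exists_coe_eq_of_abs_sub_le_half c y
    exact ⟨x, (key x hx).2 hy, rfl⟩

lemma disjoint_convexHull_of_subset_arc {A B : Set Circle1} {c w : ℝ} (hw₀ : 0 ≤ w)
    (hw₁ : w ≤ 1 / 2) (hB : B ⊆ ((↑) : ℝ → Circle1) '' Icc (c - w) (c + w))
    (hA : Disjoint A (((↑) : ℝ → Circle1) '' Icc (c - w) (c + w))) :
    Disjoint (convexHull ℝ (circleEmbed '' A)) (convexHull ℝ (circleEmbed '' B)) := by
  let ℓ := innerSL ℝ (circleEmbed c)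
  have hullA : convexHull ℝ (circleEmbed '' A) ⊆ {z | ℓ z < cos (2 * π * w)} := by
    refine convexHull_min ?_ (convex_halfSpace_lt ℓ.isLinear _)
    rintro _ ⟨a, ha, rfl⟩
    exact not_le.1 fun h =>
      hA.notMem_of_mem_left ha ((mem_coe_image_Icc_iff_cos_le_inner hw₀ hw₁ a).2 h)
  have hullB : convexHull ℝ (circleEmbed '' B) ⊆ {z | cos (2 * π * w) ≤ ℓ z} := by
    refine convexHull_min ?_ (convex_halfSpace_ge ℓ.isLinear _)
    rintro _ ⟨b, hb, rfl⟩
    exact (mem_coe_image_Icc_iff_cos_le_inner hw₀ hw₁ b).1 (hB hb)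
  exact disjoint_left.2 fun z hzA hzB =>
    (show ℓ z < _ from hullA hzA).not_ge (hullB hzB)

lemma exists_arc_of_isPreconnected {B C : Set Circle1} {a : Circle1} (hC : IsPreconnected C)
    (ha : a ∉ C) (hB : B.Finite) (hBne : B.Nonempty) (hBC : B ⊆ C) :
    ∃ c w : ℝ, 0 ≤ w ∧ w ≤ 1 / 2 ∧ B ⊆ ((↑) : ℝ → Circle1) '' Icc (c - w) (c + w) ∧
      ((↑) : ℝ → Circle1) '' Icc (c - w) (c + w) ⊆ C := by
  obtain ⟨α, rfl⟩ := QuotientAddGroup.mk_surjective a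
  -- `e.symm` lifts `{↑α}ᶜ` homeomorphically onto `Ioo α (α + 1)`
  let e := AddCircle.openPartialHomeomorphCoe (1 : ℝ) α
  have hCe : C ⊆ e.target := fun y hy hyα => ha (hyα ▸ hy)
  have hlift : IsPreconnected (e.symm '' C) := hC.image _ (e.continuousOn_symm.mono hCe)
  obtain ⟨b₁, hb₁, hmin⟩ := B.exists_min_image e.symm hB hBne
  obtain ⟨b₂, hb₂, hmax⟩ := B.exists_max_image e.symm hB hBne
  set p := e.symm b₁
  set q := e.symm b₂
  have hp : p ∈ Ioo α (α + 1) := e.map_target (hCe (hBC hb₁))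
  have hq : q ∈ Ioo α (α + 1) := e.map_target (hCe (hBC hb₂))
  have hIcc : Icc ((p + q) / 2 - (q - p) / 2) ((p + q) / 2 + (q - p) / 2) = Icc p q := by
    congr 1 <;> ring
  refine ⟨(p + q) / 2, (q - p) / 2, by linarith [hmin b₂ hb₂], by linarith [hp.1, hq.2],
    ?_, ?_⟩ <;> rw [hIcc]
  · intro b hb
    exact ⟨e.symm b, ⟨hmin b hb, hmax b hb⟩, e.right_inv (hCe (hBC hb))⟩
  · calc ((↑) : ℝ → Circle1) '' Icc p q
        ⊆ e '' (e.symm '' C) :=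
          image_mono (hlift.Icc_subset ⟨b₁, hBC hb₁, rfl⟩ ⟨b₂, hBC hb₂, rfl⟩)
      _ = C := e.toPartialEquiv.image_symm_image_of_subset_target hCe

lemma SetUnlinked.disjoint_convexHull {A B : Set Circle1} (hB : B.Finite) (h : SetUnlinked A B) :
    Disjoint (convexHull ℝ (circleEmbed '' A)) (convexHull ℝ (circleEmbed '' B)) := by
  obtain ⟨z, -, hBC⟩ := h
  rcases A.eq_empty_or_nonempty with rfl | ⟨a, ha⟩
  · simp
  rcases B.eq_empty_or_nonempty with rfl | hBne
  · simp
  have hCA : connectedComponentIn Aᶜ z ⊆ Aᶜ := connectedComponentIn_subset _ _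
  obtain ⟨c, w, hw₀, hw₁, hBarc, harcC⟩ := exists_arc_of_isPreconnected
    isPreconnected_connectedComponentIn (fun haC => hCA haC ha) hB hBne hBC
  exact disjoint_convexHull_of_subset_arc hw₀ hw₁ hBarc
    (disjoint_left.2 fun _ ha' harc => hCA (harcC harc) ha')

lemma isPreconnected_setOf_lt_inner_circleEmbed (w : ℂ) (u : ℝ) :
    IsPreconnected {y : Circle1 | u < ⟪w, circleEmbed y⟫_ℝ} := by
  obtain ⟨c, hc⟩ := exists_eq_norm_smul_circleEmbed w
  have hinner : ∀ x : ℝ, ⟪w, circleEmbed x⟫_ℝ = ‖w‖ * cos (2 * π * (x - c)) := by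
    intro x
    rw [hc, real_inner_smul_left, inner_circleEmbed_coe, ← hc]
  let T := {x : ℝ | |x - c| ≤ 1 / 2 ∧ u < ‖w‖ * cos (2 * π * (x - c))}
  have hT : T.OrdConnected := by
    refine ⟨fun x₁ hx₁ x₂ hx₂ x hx => ?_⟩
    have hcos : ∀ x' ∈ T, |x - c| ≤ |x' - c| → x ∈ T := fun x' hx' hle =>
      have hx := hle.trans hx'.1
      ⟨hx, hx'.2.trans_le <| mul_le_mul_of_nonneg_left
        ((cos_two_pi_mul_le_cos_two_pi_mul_iff hx'.1 hx).2 hle) (norm_nonneg w)⟩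
    rcases le_max_iff.1 (abs_le_max_abs_abs (sub_le_sub_right hx.1 c)
      (sub_le_sub_right hx.2 c)) with h | h
    exacts [hcos x₁ hx₁ h, hcos x₂ hx₂ h]
  have hST : {y : Circle1 | u < ⟪w, circleEmbed y⟫_ℝ} = (↑) '' T := by
    ext y
    constructor
    · intro hy
      obtain ⟨x, hx, rfl⟩ := exists_coe_eq_of_abs_sub_le_half c y
      exact ⟨x, ⟨hx, hinner x ▸ hy⟩, rfl⟩
    · rintro ⟨x, hx, rfl⟩
      show u < _
      rw [hinner]
      exact hx.2
  rw [hST]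
  exact hT.isPreconnected.image _ (AddCircle.continuous_mk' 1).continuousOn

lemma setUnlinked_of_isPreconnected {A B S : Set Circle1} (hA : A.Finite)
    (hS : IsPreconnected S) (hBS : B ⊆ S) (hSA : Disjoint S A) : SetUnlinked A B := by
  rcases B.eq_empty_or_nonempty with rfl | ⟨b, hb⟩
  · exact ⟨_, hA.infinite_compl.nonempty.some_mem, empty_subset _⟩
  have hSA' : S ⊆ Aᶜ := hSA.subset_compl_right
  exact ⟨b, hSA' (hBS hb), hBS.trans (hS.subset_connectedComponentIn (hBS hb) hSA')⟩

lemma setUnlinked_of_disjoint_convexHull {A B : Set Circle1} (hA : A.Finite) (hB : B.Finite)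
    (h : Disjoint (convexHull ℝ (circleEmbed '' A)) (convexHull ℝ (circleEmbed '' B))) :
    SetUnlinked A B := by
  obtain ⟨f, u, v, hfA, huv, hfB⟩ := geometric_hahn_banach_compact_closed
    (convex_convexHull ℝ _) ((hA.image circleEmbed).isCompact_convexHull ℝ)
    (convex_convexHull ℝ _) ((hB.image circleEmbed).isCompact_convexHull ℝ).isClosed h
  let w := (InnerProductSpace.toDual ℝ ℂ).symm f
  have hw : ∀ z, ⟪w, z⟫_ℝ = f z := fun _ => InnerProductSpace.toDual_symm_apply
  refine setUnlinked_of_isPreconnected hA (isPreconnected_setOf_lt_inner_circleEmbed w u) ?_ ?_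
  · intro b hb
    show u < _
    rw [hw]
    exact huv.trans (hfB _ (subset_convexHull ℝ _ (mem_image_of_mem _ hb)))
  · refine disjoint_left.2 fun y (hy : u < _) hyA => ?_
    rw [hw] at hy
    exact (hfA _ (subset_convexHull ℝ _ (mem_image_of_mem _ hyA))).not_gt hy

theorem setUnlinked_iff_disjoint_convexHull_general (A B : Set Circle1)
    (hA : A.Finite) (hB : B.Finite) :
    SetUnlinked A B ↔
      Disjoint (convexHull ℝ (circleEmbed '' A)) (convexHull ℝ (circleEmbed '' B)) :=
  ⟨SetUnlinked.disjoint_convexHull hB, setUnlinked_of_disjoint_convexHull hA hB⟩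

/-- Two disjoint finite subsets `A`, `B` of `ℝ/ℤ` are unlinked if and only if the Euclidean
convex hulls in `ℂ` of their images under `θ ↦ exp (2πiθ)` are disjoint. -/
theorem setUnlinked_iff_disjoint_convexHull (A B : Set Circle1)
    (hA : A.Finite) (hB : B.Finite) (hAB : Disjoint A B) :
    SetUnlinked A B ↔
      Disjoint (convexHull ℝ (circleEmbed '' A)) (convexHull ℝ (circleEmbed '' B)) :=
  setUnlinked_iff_disjoint_convexHull_general A B hA hB
end

section
/- For any holomorphic germ f₀ fixing 0 with f₀(z) = z + z² + O(z³), and for sufficiently small ε > 0, the disk D_attr = {z : |z + ε| < ε} satisfies f₀(D_attr) ⊆ D_attr, and every orbit starting in D_attr converges to 0. -/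
/-!
In the coordinate `w = -1/z` the disk `ball (-ε) ε` becomes the half-plane `Re w > 1/(2ε)`, and
`f₀ z = z + z² + o(z²)` becomes `w ↦ w + 1 + o(1)`. Once `ε` is small the real part of `w` grows
by at least `1/2` at every step, so the half-plane is invariant and `-1/f₀ⁿ(z) → ∞`.
-/

open Filter Metric Asymptotics Topology

theorem AnalyticAt.isLittleO_sub_id_add_sq {f : ℂ → ℂ} (hf : AnalyticAt ℂ f 0)
    (h0 : f 0 = 0) (h1 : deriv f 0 = 1) (h2 : iteratedDeriv 2 f 0 = 2) :
    (fun z => f z - (z + z ^ 2)) =o[𝓝 0] fun z => z ^ 2 := by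
  obtain ⟨F, hF, hf_eq⟩ := hf.exists_eq_sum_add_pow_mul 3
  have hrem : (fun z => f z - (z + z ^ 2)) = fun z => z ^ 3 * F z := by
    ext z
    rw [hf_eq]
    simp only [Finset.sum_range_succ, Finset.sum_range_zero, iteratedDeriv_zero,
      iteratedDeriv_one, h0, h1, h2, smul_eq_mul]
    norm_num
  rw [hrem]
  calc (fun z => z ^ 3 * F z) =O[𝓝 0] fun z => z ^ 3 * 1 :=
        (isBigO_refl _ _).mul (hF.continuousAt.isBigO_one ℂ)
    _ =o[𝓝 0] fun z => z ^ 2 := by simpa using isLittleO_pow_pow (by norm_num : 2 < 3)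

theorem Complex.mem_ball_neg_ofReal_iff {ε : ℝ} (hε : 0 < ε) {z : ℂ} :
    z ∈ ball (-(ε : ℂ)) ε ↔ (2 * ε)⁻¹ < (-z⁻¹).re := by
  rcases eq_or_ne z 0 with rfl | hz
  · simp [abs_of_pos hε, hε.le]
  have hn : 0 < normSq z := normSq_pos.2 hz
  rw [mem_ball, dist_eq_norm, sub_neg_eq_add, neg_re, inv_re, ← neg_div, lt_div_iff₀ hn,
    ← sq_lt_sq₀ (norm_nonneg _) hε.le, Complex.sq_norm, normSq_add, normSq_ofReal,
    conj_ofReal, re_mul_ofReal, ← div_eq_inv_mul, div_lt_iff₀ (by positivity)]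
  constructor <;> intro h <;> linarith [sq ε]

theorem Complex.half_le_re_div {a b : ℂ} (h : 2 * ‖a - b‖ < ‖b‖) : 1 / 2 ≤ (a / b).re := by
  have hb : b ≠ 0 := norm_pos_iff.1 (by linarith [norm_nonneg (a - b)])
  have hdist : ‖a / b - 1‖ ≤ 1 / 2 := by
    rw [div_sub_one hb, norm_div, div_le_iff₀ (norm_pos_iff.2 hb)]
    linarith
  have hre := (abs_le.1 ((abs_re_le_norm (a / b - 1)).trans hdist)).1
  rw [sub_re, one_re] at hre
  linarith

theorem Complex.re_neg_inv_add_half_le {z w : ℂ} (hz0 : z ≠ 0) (hz : ‖z‖ ≤ 1 / 8)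
    (hw : ‖w - (z + z ^ 2)‖ ≤ ‖z‖ ^ 2 / 8) : (-z⁻¹).re + 1 / 2 ≤ (-w⁻¹).re := by
  -- `w = z (1 + z + u z)`, so `-1/w = -1/z + (1 + u) / (1 + z + u z)` with the fraction near `1`
  set u := (w - (z + z ^ 2)) / z ^ 2 with hu_def
  have hu : ‖u‖ ≤ 1 / 8 := by
    rw [norm_div, norm_pow, div_le_iff₀ (by positivity)]
    linarith
  have huz : ‖u * z‖ ≤ 1 / 64 := by
    rw [norm_mul]
    nlinarith [norm_nonneg u, norm_nonneg z]
  have hd : 55 / 64 ≤ ‖1 + z + u * z‖ := by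
    have h := norm_sub_norm_le (1 : ℂ) (-(z + u * z))
    rw [sub_neg_eq_add, ← add_assoc, norm_one, norm_neg] at h
    linarith [norm_add_le z (u * z)]
  have hnum : ‖(1 + u) - (1 + z + u * z)‖ ≤ 17 / 64 := by
    rw [show (1 + u) - (1 + z + u * z) = u - (z + u * z) by ring]
    linarith [norm_sub_le u (z + u * z), norm_add_le z (u * z)]
  have hd0 : 1 + z + u * z ≠ 0 := norm_pos_iff.1 (by linarith)
  have hw_eq : -w⁻¹ = -z⁻¹ + (1 + u) / (1 + z + u * z) := by
    have : w = z * (1 + z + u * z) := by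
      rw [hu_def]
      field_simp
      ring
    have hd0' : 1 + z + z * u ≠ 0 := by rwa [mul_comm]
    rw [this]
    field_simp
    ring
  rw [hw_eq, add_re]
  linarith [half_le_re_div (a := 1 + u) (b := 1 + z + u * z) (by linarith)]

theorem Function.tendsto_iterate_atTop_of_add_le {α : Type*} {f : α → α} {s : Set α}
    {φ : α → ℝ} {c : ℝ} (hc : 0 < c) (hf : Set.MapsTo f s s) (hφ : ∀ x ∈ s, φ x + c ≤ φ (f x))
    {x : α} (hx : x ∈ s) : Tendsto (fun n => φ (f^[n] x)) atTop atTop := by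
  have hlin : ∀ n : ℕ, φ x + n * c ≤ φ (f^[n] x) := by
    intro n
    induction n with
    | zero => simp
    | succ n ih =>
      rw [Function.iterate_succ_apply']
      push_cast
      linarith [hφ _ (hf.iterate n hx)]
  exact tendsto_atTop_mono hlin
    (tendsto_atTop_add_const_left _ _ (tendsto_natCast_atTop_atTop.atTop_mul_const hc))

theorem Complex.tendsto_zero_of_tendsto_re_neg_inv {α : Type*} {l : Filter α} {u : α → ℂ}
    (h : Tendsto (fun n => (-(u n)⁻¹).re) l atTop) : Tendsto u l (𝓝 0) := by
  have hinv : Tendsto (fun n => (u n)⁻¹) l (Bornology.cobounded ℂ) := by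
    rw [← tendsto_norm_atTop_iff_cobounded]
    refine tendsto_atTop_mono (fun n => ?_) h
    simpa using re_le_norm (-(u n)⁻¹)
  simpa [Function.comp_def] using tendsto_inv₀_cobounded.comp hinv

/-- For a holomorphic germ `f₀` fixing `0` with `f₀ z = z + z² + O(z³)` (i.e. `f₀ 0 = 0`,
`f₀' 0 = 1`, `f₀'' 0 = 2`), for all sufficiently small `ε > 0` the disk
`D_attr = {z : |z + ε| < ε}` satisfies `f₀ (D_attr) ⊆ D_attr`, and every orbit starting in
`D_attr` converges to `0`. -/
theorem attracting_petal_exists (f₀ : ℂ → ℂ) (hf : AnalyticAt ℂ f₀ 0)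
    (h0 : f₀ 0 = 0) (h1 : deriv f₀ 0 = 1) (h2 : iteratedDeriv 2 f₀ 0 = 2) :
    ∃ ε₀ > 0, ∀ ε : ℝ, 0 < ε → ε < ε₀ →
      Set.MapsTo f₀ (ball (-(ε : ℂ)) ε) (ball (-(ε : ℂ)) ε) ∧
      ∀ z ∈ ball (-(ε : ℂ)) ε,
        Tendsto (fun n => f₀^[n] z) atTop (nhds 0) := by
  obtain ⟨r, hr, hnear⟩ := eventually_nhds_iff_ball.1
    (((hf.isLittleO_sub_id_add_sq h0 h1 h2).bound (by norm_num : (0 : ℝ) < 1 / 8)).and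
      (closedBall_mem_nhds (0 : ℂ) (by norm_num : (0 : ℝ) < 1 / 8)))
  refine ⟨r / 2, by positivity, fun ε hε hεr => ?_⟩
  have hstep : ∀ z ∈ ball (-(ε : ℂ)) ε, (-z⁻¹).re + 1 / 2 ≤ (-(f₀ z)⁻¹).re := by
    intro z hz
    have hz0 : z ≠ 0 := by
      rintro rfl
      simp [abs_of_pos hε] at hz
    have hzr : z ∈ ball 0 r :=
      ball_subset_ball' (by simp [abs_of_pos hε]; linarith) hz
    obtain ⟨hbound, hsmall⟩ := hnear z hzr
    refine Complex.re_neg_inv_add_half_le hz0 (by simpa using hsmall) ?_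
    simpa [norm_pow, div_eq_inv_mul] using hbound
  have hmaps : Set.MapsTo f₀ (ball (-(ε : ℂ)) ε) (ball (-(ε : ℂ)) ε) := by
    intro z hz
    have := hstep z hz
    rw [Complex.mem_ball_neg_ofReal_iff hε] at hz ⊢
    linarith
  exact ⟨hmaps, fun z hz => Complex.tendsto_zero_of_tendsto_re_neg_inv
    (Function.tendsto_iterate_atTop_of_add_le one_half_pos hmaps hstep hz)⟩
end
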